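/- Let X be a compact metric space, {W_j}_{j=1}^N a finite open cover, δ a Lebesgue number for the cover, F_j = X \ W_j, and E_j = {x : d(x,F_j) ≥ δ/2}. Suppose M is a metric space, ι_M : M → Z and ι_X : X → Z are isometric embeddings into a common metric space Z with Hausdorff distance between their images less than δ' where δ' ≤ δ/8. Define U_j = {p ∈ M : d_Z(ι_M(p), ι_X(E_j)) < 2δ'}. If a point p ∈ M lies in U_{j_1}, ..., U_{j_m} for distinct indices j_1, ..., j_m, then there exists x ∈ X lying in W_{j_1}, ..., W_{j_m}. In particular, the multiplicity (order) of the cover {U_j} of M is at most the order of the cover {W_j} of X. -/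

import Mathlib

open Metric Set

/-!
Pick `x ∈ X` with `ιX x` within `δ'` of `ιM p`. If `p ∈ U j`, the triangle inequality in `Z` puts
`x` within `3δ' < δ/2` of `E j`, while every point of `E j` is at distance `≥ δ/2` from
`F j = (W j)ᶜ`; hence `x ∈ W j`.
-/

theorem notMem_of_infEDist_lt {X : Type*} [PseudoEMetricSpace X] {E F : Set X} {x : X}
    {r : ENNReal} (hE : ∀ e ∈ E, r ≤ infEDist e F) (hx : infEDist x E < r) : x ∉ F := by
  intro hxF
  obtain ⟨e, he, hxe⟩ := infEDist_lt_iff.mp hx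
  have hex : infEDist e F ≤ edist x e := edist_comm e x ▸ infEDist_le_edist_of_mem hxF
  exact (((hE e he).trans hex).trans_lt hxe).false

theorem Isometry.infEDist_lt_add {X Z : Type*} [PseudoEMetricSpace X] [PseudoEMetricSpace Z]
    {f : X → Z} (hf : Isometry f) {E : Set X} {x : X} {z : Z} {a b : ENNReal}
    (hx : edist (f x) z < a) (hz : infEDist z (f '' E) < b) : infEDist x E < a + b :=
  calc infEDist x E = infEDist (f x) (f '' E) := (infEDist_image hf).symm
    _ ≤ edist (f x) z + infEDist z (f '' E) := infEDist_le_edist_add_infEDist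
    _ < a + b := ENNReal.add_lt_add hx hz

theorem nerve_order_bound_general
    {X M Z : Type*} [MetricSpace X] [MetricSpace M] [MetricSpace Z]
    {N : ℕ} (W : Fin N → Set X)
    (δ δ' : ℝ) (hδ' : 0 < δ') (hδ'δ : δ' ≤ δ / 8)
    (F : Fin N → Set X) (hF : ∀ j, F j = (W j)ᶜ)
    (E : Fin N → Set X)
    (hE : ∀ j, E j = {x : X | ENNReal.ofReal (δ / 2) ≤ EMetric.infEdist x (F j)})
    (ιM : M → Z) (ιX : X → Z) (hιX : Isometry ιX)
    (hHaus : EMetric.hausdorffEdist (Set.range ιM) (Set.range ιX) < ENNReal.ofReal δ')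
    (U : Fin N → Set M)
    (hU : ∀ j, U j = {p : M | EMetric.infEdist (ιM p) (ιX '' E j) < ENNReal.ofReal (2 * δ')}) :
    (∀ (p : M) (S : Finset (Fin N)), (∀ j ∈ S, p ∈ U j) → ∃ x : X, ∀ j ∈ S, x ∈ W j) ∧
      (∀ k : ℕ, (∀ (x : X) (S : Finset (Fin N)), (∀ j ∈ S, x ∈ W j) → S.card ≤ k) →
        ∀ (p : M) (S : Finset (Fin N)), (∀ j ∈ S, p ∈ U j) → S.card ≤ k) := by
  have hmargin : ENNReal.ofReal δ' + ENNReal.ofReal (2 * δ') ≤ ENNReal.ofReal (δ / 2) := by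
    rw [← ENNReal.ofReal_add hδ'.le (by positivity)]
    exact ENNReal.ofReal_le_ofReal (by linarith)
  have hcommon : ∀ (p : M) (S : Finset (Fin N)), (∀ j ∈ S, p ∈ U j) → ∃ x : X, ∀ j ∈ S, x ∈ W j := by
    intro p S hp
    obtain ⟨_, ⟨x, rfl⟩, hpx⟩ := exists_edist_lt_of_hausdorffEDist_lt (mem_range_self p) hHaus
    refine ⟨x, fun j hj => ?_⟩
    have hpE : infEDist (ιM p) (ιX '' E j) < ENNReal.ofReal (2 * δ') := by
      have hpj := hp j hj
      rw [hU j] at hpj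
      exact hpj
    have hxE : infEDist x (E j) < ENNReal.ofReal (δ / 2) :=
      (hιX.infEDist_lt_add (edist_comm (ιM p) (ιX x) ▸ hpx) hpE).trans_le hmargin
    have hEF : ∀ e ∈ E j, ENNReal.ofReal (δ / 2) ≤ infEDist e (F j) := fun e he => by
      rw [hE j] at he
      exact he
    simpa [hF j] using notMem_of_infEDist_lt hEF hxE
  exact ⟨hcommon, fun k hW p S hp => (hcommon p S hp).elim fun x hx => hW x S hx⟩

/-- Let `X` be a compact metric space, `{W j}` a finite open cover with Lebesgue number `δ`,
`F j = X \ W j`, `E j = {x : d(x, F j) ≥ δ/2}`.  Let `M` be a metric space, and let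
`ιM : M → Z`, `ιX : X → Z` be isometric embeddings into a common metric space `Z` whose images
have Hausdorff distance `< δ'`, where `0 < δ' ≤ δ/8`.  Put
`U j = {p ∈ M : d_Z(ιM p, ιX(E j)) < 2δ'}`.  If a point `p ∈ M` lies in `U j` for every `j` in
a finite set `S` of indices, then there is a point `x ∈ X` lying in `W j` for every `j ∈ S`.
In particular, if the order of the cover `{W j}` is at most `k`, then so is that of `{U j}`. -/
theorem nerve_order_bound
    {X M Z : Type*} [MetricSpace X] [CompactSpace X] [MetricSpace M] [MetricSpace Z]
    {N : ℕ} (W : Fin N → Set X) (hopen : ∀ j, IsOpen (W j))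
    (hcover : (⋃ j, W j) = Set.univ)
    (δ δ' : ℝ) (hδ : 0 < δ) (hδ' : 0 < δ') (hδ'δ : δ' ≤ δ / 8)
    (hLeb : ∀ x : X, ∃ j, Metric.ball x δ ⊆ W j)
    (F : Fin N → Set X) (hF : ∀ j, F j = (W j)ᶜ)
    (E : Fin N → Set X)
    (hE : ∀ j, E j = {x : X | ENNReal.ofReal (δ / 2) ≤ EMetric.infEdist x (F j)})
    (ιM : M → Z) (ιX : X → Z) (hιM : Isometry ιM) (hιX : Isometry ιX)
    (hHaus : EMetric.hausdorffEdist (Set.range ιM) (Set.range ιX) < ENNReal.ofReal δ')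
    (U : Fin N → Set M)
    (hU : ∀ j, U j = {p : M | EMetric.infEdist (ιM p) (ιX '' E j) < ENNReal.ofReal (2 * δ')}) :
    (∀ (p : M) (S : Finset (Fin N)), (∀ j ∈ S, p ∈ U j) → ∃ x : X, ∀ j ∈ S, x ∈ W j) ∧
      (∀ k : ℕ, (∀ (x : X) (S : Finset (Fin N)), (∀ j ∈ S, x ∈ W j) → S.card ≤ k) →
        ∀ (p : M) (S : Finset (Fin N)), (∀ j ∈ S, p ∈ U j) → S.card ≤ k) :=
  nerve_order_bound_general W δ δ' hδ' hδ'δ F hF E hE ιM ιX hιX hHaus U hU
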